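/- Let σy = !![0, −I; I, 0], σz = !![1, 0; 0, −1] ∈ Matrix (Fin 2) (Fin 2) ℂ, let |±⟩ := (1/√2)·(e₀ ± e₁) ∈ ℂ², and define the unit vectors Φ₊ := (1/√2)·(|+⟩ ⊗ |+⟩ + |−⟩ ⊗ |−⟩) and Φ₋ := (1/√2)·(|+⟩ ⊗ |+⟩ − |−⟩ ⊗ |−⟩) in ℂ² ⊗ ℂ² ≅ (Fin 2 × Fin 2) → ℂ. Define the observables A₀ := (σy − σz)/√2, A₁ := (σy + σz)/√2, B₀ := σy, B₁ := σz, and the CHSH operator S := A₀ ⊗ B₀ + A₀ ⊗ B₁ + A₁ ⊗ B₀ − A₁ ⊗ B₁ (Kronecker products). Then ⟨Φ₊, S Φ₊⟩ = −2√2 and ⟨Φ₋, S Φ₋⟩ = +2√2. -/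

import Mathlib

open Matrix Kronecker

noncomputable section

/-- Pauli matrix σy. -/
def σy : Matrix (Fin 2) (Fin 2) ℂ := !![0, -Complex.I; Complex.I, 0]

/-- Pauli matrix σz. -/
def σz : Matrix (Fin 2) (Fin 2) ℂ := !![1, 0; 0, -1]

/-- The state `|+⟩ = (e₀ + e₁)/√2`. -/
def plus : Fin 2 → ℂ := fun i => (1 / (Real.sqrt 2 : ℂ)) * (![1, 0] i + ![0, 1] i)

/-- The state `|−⟩ = (e₀ − e₁)/√2`. -/
def minus : Fin 2 → ℂ := fun i => (1 / (Real.sqrt 2 : ℂ)) * (![1, 0] i - ![0, 1] i)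

/-- `Φ₊ = (|+⟩⊗|+⟩ + |−⟩⊗|−⟩)/√2`. -/
def Φp : Fin 2 × Fin 2 → ℂ :=
  fun p => (1 / (Real.sqrt 2 : ℂ)) * (plus p.1 * plus p.2 + minus p.1 * minus p.2)

/-- `Φ₋ = (|+⟩⊗|+⟩ − |−⟩⊗|−⟩)/√2`. -/
def Φm : Fin 2 × Fin 2 → ℂ :=
  fun p => (1 / (Real.sqrt 2 : ℂ)) * (plus p.1 * plus p.2 - minus p.1 * minus p.2)

/-- `A₀ = (σy − σz)/√2`. -/
def A₀ : Matrix (Fin 2) (Fin 2) ℂ := (1 / (Real.sqrt 2 : ℂ)) • (σy - σz)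

/-- `A₁ = (σy + σz)/√2`. -/
def A₁ : Matrix (Fin 2) (Fin 2) ℂ := (1 / (Real.sqrt 2 : ℂ)) • (σy + σz)

/-- The CHSH operator `S = A₀⊗σy + A₀⊗σz + A₁⊗σy − A₁⊗σz`. -/
def S : Matrix (Fin 2 × Fin 2) (Fin 2 × Fin 2) ℂ :=
  A₀ ⊗ₖ σy + A₀ ⊗ₖ σz + A₁ ⊗ₖ σy - A₁ ⊗ₖ σz

/-! The CHSH operator collapses: since `A₀ + A₁ = √2 σy` and `A₀ − A₁ = −√2 σz`, bilinearity of `⊗ₖ` gives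
`S = √2 (σy ⊗ σy − σz ⊗ σz)`. In the computational basis `Φ₊ = (|00⟩ + |11⟩)/√2` and
`Φ₋ = (|01⟩ + |10⟩)/√2`, and on a vector `∑ᵢ |i⟩ ⊗ |f i⟩` `A ⊗ B` has expectation
`∑ᵢⱼ Aᵢⱼ B_{f i, f j}`. This gives `⟨σy ⊗ σy⟩ = ∓1` and `⟨σz ⊗ σz⟩ = ±1` in `Φ±`. -/

theorem kronecker_chsh_eq_smul {m R : Type*} [CommRing R] (c : R) (Y Z : Matrix m m R) :
    (c • (Y - Z)) ⊗ₖ Y + (c • (Y - Z)) ⊗ₖ Z + (c • (Y + Z)) ⊗ₖ Y - (c • (Y + Z)) ⊗ₖ Z =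
      (2 * c) • (Y ⊗ₖ Y - Z ⊗ₖ Z) := by
  ext ⟨i, k⟩ ⟨j, l⟩
  simp only [Matrix.add_apply, Matrix.sub_apply, Matrix.smul_apply, kroneckerMap_apply, smul_eq_mul]
  ring

/-- The unnormalised maximally entangled vector `∑ᵢ |i⟩ ⊗ |f i⟩`. -/
def graphVector {n m R : Type*} [DecidableEq m] [Zero R] [One R] (f : n → m) : n × m → R :=
  fun p => if f p.1 = p.2 then 1 else 0

theorem star_graphVector {n m R : Type*} [DecidableEq m] [Semiring R] [StarRing R] (f : n → m) :
    star (graphVector f : n × m → R) = graphVector f := by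
  funext p
  rw [Pi.star_apply, graphVector]
  split_ifs <;> simp

theorem expectation_kronecker_graphVector {n m R : Type*} [Fintype n] [Fintype m] [DecidableEq m]
    [CommSemiring R] [StarRing R] (f : n → m) (A : Matrix n n R) (B : Matrix m m R) :
    star (graphVector f) ⬝ᵥ (A ⊗ₖ B) *ᵥ graphVector f = ∑ i, ∑ j, A i j * B (f i) (f j) := by
  rw [star_graphVector]
  simp [graphVector, dotProduct, mulVec, Fintype.sum_prod_type, kroneckerMap_apply]

theorem expectation_smul {n R : Type*} [Fintype n] [CommSemiring R] [StarRing R]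
    (c : R) (M : Matrix n n R) (ψ : n → R) :
    star (c • ψ) ⬝ᵥ M *ᵥ (c • ψ) = (star c * c) * (star ψ ⬝ᵥ M *ᵥ ψ) := by
  rw [star_smul, mulVec_smul, dotProduct_smul, smul_dotProduct, smul_eq_mul, smul_eq_mul,
    mul_left_comm, mul_assoc]

theorem ofReal_sqrt_two_sq : (Real.sqrt 2 : ℂ) ^ 2 = 2 := by
  rw [← Complex.ofReal_pow, Real.sq_sqrt zero_le_two, Complex.ofReal_ofNat]

theorem S_eq_sqrt_two_smul : S = (Real.sqrt 2 : ℂ) • (σy ⊗ₖ σy - σz ⊗ₖ σz) := by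
  rw [S, A₀, A₁, kronecker_chsh_eq_smul]
  congr 1
  field_simp
  exact ofReal_sqrt_two_sq.symm

theorem expectation_S (ψ : Fin 2 × Fin 2 → ℂ) :
    star ψ ⬝ᵥ S *ᵥ ψ =
      Real.sqrt 2 * (star ψ ⬝ᵥ (σy ⊗ₖ σy) *ᵥ ψ - star ψ ⬝ᵥ (σz ⊗ₖ σz) *ᵥ ψ) := by
  rw [S_eq_sqrt_two_smul, smul_mulVec, dotProduct_smul, sub_mulVec, dotProduct_sub, smul_eq_mul]

theorem Φp_eq : Φp = (1 / (Real.sqrt 2 : ℂ)) • graphVector id := by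
  funext ⟨i, j⟩
  fin_cases i <;> fin_cases j <;> simp [Φp, plus, minus, graphVector] <;> field_simp <;>
    linear_combination -ofReal_sqrt_two_sq

theorem Φm_eq : Φm = (1 / (Real.sqrt 2 : ℂ)) • graphVector Fin.rev := by
  funext ⟨i, j⟩
  fin_cases i <;> fin_cases j <;> simp [Φm, plus, minus, graphVector] <;> field_simp <;>
    linear_combination -ofReal_sqrt_two_sq

theorem expectation_kronecker_bell (f : Fin 2 → Fin 2) (A B : Matrix (Fin 2) (Fin 2) ℂ) :
    star ((1 / (Real.sqrt 2 : ℂ)) • graphVector f) ⬝ᵥ (A ⊗ₖ B) *ᵥ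
        ((1 / (Real.sqrt 2 : ℂ)) • graphVector f) =
      (∑ i, ∑ j, A i j * B (f i) (f j)) / 2 := by
  have normalization : star (1 / (Real.sqrt 2 : ℂ)) * (1 / Real.sqrt 2) = 1 / 2 := by
    rw [star_div₀, star_one, Complex.star_def, Complex.conj_ofReal, one_div_mul_one_div,
      ← sq, ofReal_sqrt_two_sq]
  rw [expectation_smul, expectation_kronecker_graphVector, normalization]
  ring

theorem σy_correlation_id : ∑ i, ∑ j, σy i j * σy (id i) (id j) = -2 := by
  simp [σy, Fin.sum_univ_two]; ring

theorem σz_correlation_id : ∑ i, ∑ j, σz i j * σz (id i) (id j) = 2 := by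
  simp [σz, Fin.sum_univ_two]; ring

theorem σy_correlation_rev : ∑ i, ∑ j, σy i j * σy (Fin.rev i) (Fin.rev j) = 2 := by
  simp [σy, Fin.sum_univ_two]; ring

theorem σz_correlation_rev : ∑ i, ∑ j, σz i j * σz (Fin.rev i) (Fin.rev j) = -2 := by
  simp [σz, Fin.sum_univ_two]; ring

/-- The states `Φ±` maximally violate the CHSH inequality:
`⟨Φ₊, S Φ₊⟩ = −2√2` and `⟨Φ₋, S Φ₋⟩ = +2√2`. -/
theorem chsh_maximal_violation :
    (∑ p : Fin 2 × Fin 2, star (Φp p) * S.mulVec Φp p) = -((2 * Real.sqrt 2 : ℝ) : ℂ) ∧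
    (∑ p : Fin 2 × Fin 2, star (Φm p) * S.mulVec Φm p) = ((2 * Real.sqrt 2 : ℝ) : ℂ) := by
  change star Φp ⬝ᵥ S *ᵥ Φp = _ ∧ star Φm ⬝ᵥ S *ᵥ Φm = _
  rw [expectation_S, expectation_S, Φp_eq, Φm_eq]
  simp only [expectation_kronecker_bell, σy_correlation_id, σz_correlation_id,
    σy_correlation_rev, σz_correlation_rev]
  push_cast
  constructor <;> ring

end
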